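/- arXiv:2603.13069 — 4 statements merged into one kernel-verified Lean document; each statement's English description precedes it below -/
import Mathlib

section
/- Fix $0 < \bar\alpha_t < \bar\alpha_{t-1} < 1$, set $v_t = 1 - \bar\alpha_t$, $v_{t-1} = 1 - \bar\alpha_{t-1}$, and $b_t = \sqrt{v_{t-1}} - \sqrt{\bar\alpha_{t-1}}\sqrt{v_t}/\sqrt{\bar\alpha_t}$. Define $f_t(\lambda) = \sqrt{\bar\alpha_{t-1}/\bar\alpha_t} - |b_t| \sqrt{v_t}/(\lambda\bar\alpha_t + v_t)$ for $\lambda > 0$. Then (i) $f_t$ is strictly increasing on $(0,\infty)$; (ii) $f_t(1) < 1$; (iii) there is a unique $\lambda^*(t) > 1$ with $f_t(\lambda^*(t)) = 1$, given by $\lambda^*(t) = \sqrt{v_t}(\sqrt{v_t} - \sqrt{v_{t-1}}) / ((\sqrt{\bar\alpha_{t-1}} - \sqrt{\bar\alpha_t})\sqrt{\bar\alpha_t})$; and (iv) $f_t(\lambda) < 1$ if and only if $\lambda < \lambda^*(t)$. -/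
/-!
In the coordinates `a = √ᾱ_t`, `p = √ᾱ_{t-1}`, `s = √v_t`, `q = √v_{t-1}` the pairs `(a, s)` and
`(p, q)` are unit vectors, `|b_t| = p s / a - q`, and clearing denominators gives
`f_t(λ) - 1 = (p - a) a (λ - λ*) / (λ a² + s²)`, so `f_t - 1` has the sign of `λ - λ*`.
Moreover `s (s - q) - (p - a) a = ((p - a)² + (s - q)²) / 2` because both vectors are unit
vectors, whence `λ* > 1`.
-/

open Set

namespace DDIMExpansion

noncomputable def expansion (a p s q x : ℝ) : ℝ :=
  p / a - (p * s / a - q) * s / (a ^ 2 * x + s ^ 2)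

noncomputable def threshold (a p s q : ℝ) : ℝ :=
  s * (s - q) / ((p - a) * a)

theorem strictMonoOn_sub_div_mul_add {M c A V : ℝ} (hc : 0 < c) (hA : 0 < A) (hV : 0 ≤ V) :
    StrictMonoOn (fun x => M - c / (A * x + V)) (Ioi 0) := by
  intro x hx y _ hxy
  have hxA : 0 < A * x + V := by have := mul_pos hA (mem_Ioi.1 hx); linarith
  have hAxy : A * x + V < A * y + V := by gcongr
  simpa using div_lt_div_of_pos_left hc hxA hAxy

variable {a p s q : ℝ}

theorem expansion_sub_one {x : ℝ} (ha : a ≠ 0) (hpa : p ≠ a) (hx : a ^ 2 * x + s ^ 2 ≠ 0) :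
    expansion a p s q x - 1 = (x - threshold a p s q) * ((p - a) * a / (a ^ 2 * x + s ^ 2)) := by
  have hpa' : p - a ≠ 0 := sub_ne_zero.2 hpa
  unfold expansion threshold
  field_simp
  ring

theorem one_lt_threshold (ha : 0 < a) (hap : a < p) (has : a ^ 2 + s ^ 2 = 1)
    (hpq : p ^ 2 + q ^ 2 = 1) : 1 < threshold a p s q := by
  have hgap : s * (s - q) - (p - a) * a = ((p - a) ^ 2 + (s - q) ^ 2) / 2 := by
    linear_combination (has - hpq) / 2
  have := sub_pos.2 hap
  rw [threshold, one_lt_div (by positivity), ← sub_pos, hgap]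
  positivity

theorem lt_of_sq_add_sq_eq_one (ha : 0 < a) (hap : a < p) (hs : 0 ≤ s) (hq : 0 ≤ q)
    (has : a ^ 2 + s ^ 2 = 1) (hpq : p ^ 2 + q ^ 2 = 1) : q < s := by
  rw [← pow_lt_pow_iff_left₀ hq hs two_ne_zero]
  nlinarith

theorem lt_mul_div_of_lt (ha : 0 < a) (hap : a < p) (hqs : q < s) (hq : 0 ≤ q) :
    q < p * s / a := by
  rw [lt_div_iff₀ ha]
  nlinarith

theorem strictMonoOn_expansion (ha : 0 < a) (hap : a < p) (hqs : q < s) (hq : 0 ≤ q) :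
    StrictMonoOn (expansion a p s q) (Ioi 0) :=
  strictMonoOn_sub_div_mul_add (mul_pos (sub_pos.2 (lt_mul_div_of_lt ha hap hqs hq)) (by linarith))
    (pow_pos ha 2) (sq_nonneg s)

theorem expansion_sub_one_eq_mul_pos (ha : 0 < a) (hap : a < p) {x : ℝ} (hx : 0 < x) :
    ∃ r > 0, expansion a p s q x - 1 = (x - threshold a p s q) * r := by
  have hden : 0 < a ^ 2 * x + s ^ 2 := by positivity
  exact ⟨_, by have := sub_pos.2 hap; positivity, expansion_sub_one ha.ne' hap.ne' hden.ne'⟩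

theorem expansion_lt_one_iff (ha : 0 < a) (hap : a < p) {x : ℝ} (hx : 0 < x) :
    expansion a p s q x < 1 ↔ x < threshold a p s q := by
  obtain ⟨r, hr, h⟩ := expansion_sub_one_eq_mul_pos (s := s) (q := q) ha hap hx
  rw [← sub_neg, h, ← not_le, mul_nonneg_iff_of_pos_right hr, not_le, sub_neg]

theorem expansion_eq_one_iff (ha : 0 < a) (hap : a < p) {x : ℝ} (hx : 0 < x) :
    expansion a p s q x = 1 ↔ x = threshold a p s q := by
  obtain ⟨r, hr, h⟩ := expansion_sub_one_eq_mul_pos (s := s) (q := q) ha hap hx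
  rw [← sub_eq_zero, h, mul_eq_zero, sub_eq_zero, or_iff_left hr.ne']

end DDIMExpansion

open DDIMExpansion in
/-- properties of the per-step diagonal expansion function
`f_t(λ) = √(ᾱ_{t-1}/ᾱ_t) - |b_t| √v_t/(λ ᾱ_t + v_t)` for `0 < ᾱ_t < ᾱ_{t-1} < 1`:
(i) strictly increasing on `(0,∞)`; (ii) `f_t(1) < 1`; (iii) a unique `λ*(t) > 1`
with `f_t(λ*(t)) = 1`, given by the closed form; (iv) `f_t(λ) < 1 ↔ λ < λ*(t)`. -/
theorem stmt_7 (aprev acur : ℝ) (h1 : 0 < acur) (h2 : acur < aprev) (h3 : aprev < 1) :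
    let v : ℝ := 1 - acur
    let vprev : ℝ := 1 - aprev
    let b : ℝ := Real.sqrt vprev - Real.sqrt aprev * Real.sqrt v / Real.sqrt acur
    let f : ℝ → ℝ := fun lam =>
      Real.sqrt (aprev / acur) - |b| * Real.sqrt v / (lam * acur + v)
    let lamstar : ℝ := Real.sqrt v * (Real.sqrt v - Real.sqrt vprev) /
      ((Real.sqrt aprev - Real.sqrt acur) * Real.sqrt acur)
    StrictMonoOn f (Set.Ioi 0) ∧
    f 1 < 1 ∧
    (1 < lamstar ∧ f lamstar = 1 ∧ ∀ lam : ℝ, 0 < lam → f lam = 1 → lam = lamstar) ∧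
    (∀ lam : ℝ, 0 < lam → (f lam < 1 ↔ lam < lamstar)) := by
  intro v vprev b f lamstar
  have ha : 0 < √acur := Real.sqrt_pos.2 h1
  have hap : √acur < √aprev := Real.sqrt_lt_sqrt h1.le h2
  have hv : 0 ≤ v := by simp only [v]; linarith
  have has : √acur ^ 2 + √v ^ 2 = 1 := by
    rw [Real.sq_sqrt h1.le, Real.sq_sqrt hv]; ring
  have hpq : √aprev ^ 2 + √vprev ^ 2 = 1 := by
    rw [Real.sq_sqrt (by linarith), Real.sq_sqrt (by simp only [vprev]; linarith)]; ring
  have hqs := lt_of_sq_add_sq_eq_one ha hap (Real.sqrt_nonneg _) (Real.sqrt_nonneg _) has hpq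
  have hb : |b| = √aprev * √v / √acur - √vprev := by
    rw [abs_of_neg (sub_neg.2 (lt_mul_div_of_lt ha hap hqs (Real.sqrt_nonneg _))), neg_sub]
  have hf : f = expansion √acur √aprev √v √vprev := by
    funext x
    simp only [f, expansion, hb, Real.sqrt_div' _ h1.le, Real.sq_sqrt h1.le, Real.sq_sqrt hv]
    ring
  have hL : 1 < lamstar := one_lt_threshold ha hap has hpq
  rw [hf]
  exact ⟨strictMonoOn_expansion ha hap hqs (Real.sqrt_nonneg _),
    (expansion_lt_one_iff ha hap one_pos).2 hL,
    ⟨hL, (expansion_eq_one_iff ha hap (by linarith)).2 rfl,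
      fun x hx => (expansion_eq_one_iff ha hap hx).1⟩,
    fun x hx => expansion_lt_one_iff ha hap hx⟩
end

section
/- Let $f_t(\lambda) = \sqrt{\bar\alpha_{t-1}/\bar\alpha_t} - |b_t|\sqrt{v_t}/(\lambda\bar\alpha_t + v_t)$ for a strictly decreasing schedule $1 = \bar\alpha_0 > \bar\alpha_1 > \cdots > \bar\alpha_T > 0$ (with $v_t = 1-\bar\alpha_t$ and $b_t$ the DDIM score coefficient), and define $G(\lambda) = \prod_{t=1}^T f_t(\lambda)$ on the domain where all factors are positive. Then $G$ is strictly increasing, $G(1) < 1$, $\lim_{\lambda\to\infty} G(\lambda) = 1/\sqrt{\bar\alpha_T} > 1$, and hence there exists a unique $\lambda^{**} > 1$ with $G(\lambda^{**}) = 1$. -/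
/-!
Write `p = ᾱ_{t-1}`, `q = ᾱ_t`. Each factor `f_t` has the form `√(p/q) - c/(λq + 1 - q)` with
`c > 0`, so it increases strictly towards `√p/√q`, and the limits telescope to `1/√ᾱ_T`.
At `λ = 1` the denominator is `1`, and since `b_t < 0` the factor simplifies to
`√p√q + √(1-p)√(1-q)`, the inner product of two distinct unit vectors, which is `< 1`.
Uniqueness of `λ**` is strict monotonicity, existence is the intermediate value theorem.
-/

open Filter Topology Finset

/-- The DDIM score coefficient `b_t`, with `p = ᾱ_{t-1}` and `q = ᾱ_t`. -/
noncomputable def ddimCoeff (p q : ℝ) : ℝ :=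
  √(1 - p) - √p * √(1 - q) / √q

/-- The factor `f_t(λ)` of the discrete Moran equation, with `p = ᾱ_{t-1}` and `q = ᾱ_t`. -/
noncomputable def moranFactor (p q lam : ℝ) : ℝ :=
  √(p / q) - |ddimCoeff p q| * √(1 - q) / (lam * q + (1 - q))

lemma sqrt_mul_sqrt_add_sqrt_one_sub_mul_lt_one {p q : ℝ} (hq : 0 ≤ q) (hqp : q < p)
    (hp : p ≤ 1) : √p * √q + √(1 - p) * √(1 - q) < 1 := by
  have hsq : √q < √p := Real.sqrt_lt_sqrt hq hqp
  have hsq' : √(1 - p) < √(1 - q) := Real.sqrt_lt_sqrt (by linarith) (by linarith)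
  -- `2 (1 - ⟨u, v⟩) = ‖u - v‖²` for the unit vectors `u = (√p, √(1-p))`, `v = (√q, √(1-q))`.
  nlinarith [Real.sq_sqrt hq, Real.sq_sqrt (hq.trans hqp.le), Real.sq_sqrt (sub_nonneg.2 hp),
    Real.sq_sqrt (show 0 ≤ 1 - q by linarith), mul_pos (sub_pos.2 hsq) (sub_pos.2 hsq),
    mul_pos (sub_pos.2 hsq') (sub_pos.2 hsq')]

section MoranFactor

variable {p q : ℝ}

lemma ddimCoeff_neg (hq : 0 < q) (hqp : q < p) (hp : p ≤ 1) : ddimCoeff p q < 0 := by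
  have h1 : √(1 - p) < √(1 - q) := Real.sqrt_lt_sqrt (by linarith) (by linarith)
  have h2 : √(1 - q) < √p * √(1 - q) / √q := by
    rw [lt_div_iff₀ (Real.sqrt_pos.2 hq), mul_comm]
    exact mul_lt_mul_of_pos_right (Real.sqrt_lt_sqrt hq.le hqp) (Real.sqrt_pos.2 (by linarith))
  rw [ddimCoeff]
  linarith

lemma moranFactor_strictMonoOn (hq : 0 < q) (hqp : q < p) (hp : p ≤ 1) :
    StrictMonoOn (moranFactor p q) (Set.Ioi 0) := by
  have hc : 0 < |ddimCoeff p q| * √(1 - q) :=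
    mul_pos (abs_pos.2 (ddimCoeff_neg hq hqp hp).ne) (Real.sqrt_pos.2 (by linarith))
  intro x (hx : 0 < x) y _ hxy
  have hdx : 0 < x * q + (1 - q) := by nlinarith
  have hdxy : x * q + (1 - q) < y * q + (1 - q) := by nlinarith
  have := div_lt_div_of_pos_left hc hdx hdxy
  simp only [moranFactor]
  linarith

lemma continuousOn_moranFactor (hq : 0 ≤ q) (hq1 : q ≤ 1) :
    ContinuousOn (moranFactor p q) (Set.Ioi 0) := by
  refine continuousOn_const.sub (continuousOn_const.div (by fun_prop) fun x (hx : 0 < x) => ?_)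
  rcases hq.eq_or_lt with rfl | hq
  · norm_num
  · nlinarith

lemma moranFactor_one (hq : 0 < q) (hqp : q < p) (hp : p ≤ 1) :
    moranFactor p q 1 = √p * √q + √(1 - p) * √(1 - q) := by
  have hb : |ddimCoeff p q| = √p * √(1 - q) / √q - √(1 - p) := by
    rw [abs_of_neg (ddimCoeff_neg hq hqp hp), ddimCoeff]
    ring
  have hsq : √q ≠ 0 := (Real.sqrt_pos.2 hq).ne'
  have hunit : √q * √q + √(1 - q) * √(1 - q) = 1 := by
    rw [Real.mul_self_sqrt hq.le, Real.mul_self_sqrt (by linarith)]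
    ring
  rw [moranFactor, hb, Real.sqrt_div' _ hq.le, show 1 * q + (1 - q) = 1 by ring]
  field_simp
  linear_combination (-√p) * hunit

lemma moranFactor_one_pos (hq : 0 < q) (hqp : q < p) (hp : p ≤ 1) : 0 < moranFactor p q 1 := by
  rw [moranFactor_one hq hqp hp]
  have := mul_pos (Real.sqrt_pos.2 (hq.trans hqp)) (Real.sqrt_pos.2 hq)
  positivity

lemma moranFactor_one_lt_one (hq : 0 < q) (hqp : q < p) (hp : p ≤ 1) : moranFactor p q 1 < 1 := by
  rw [moranFactor_one hq hqp hp]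
  exact sqrt_mul_sqrt_add_sqrt_one_sub_mul_lt_one hq.le hqp hp

lemma moranFactor_pos {lam : ℝ} (hq : 0 < q) (hqp : q < p) (hp : p ≤ 1) (hlam : 1 ≤ lam) :
    0 < moranFactor p q lam :=
  (moranFactor_one_pos hq hqp hp).trans_le <| (moranFactor_strictMonoOn hq hqp hp).monotoneOn
    (Set.mem_Ioi.2 one_pos) (Set.mem_Ioi.2 (one_pos.trans_le hlam)) hlam

lemma tendsto_moranFactor_atTop (hq : 0 < q) :
    Tendsto (moranFactor p q) atTop (𝓝 (√p / √q)) := by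
  have hden : Tendsto (fun lam : ℝ => lam * q + (1 - q)) atTop atTop :=
    tendsto_atTop_add_const_right _ _ (tendsto_id.atTop_mul_const hq)
  have := tendsto_const_nhds (x := √(p / q)) (f := atTop) |>.sub
    (tendsto_const_nhds (x := |ddimCoeff p q| * √(1 - q)) |>.div_atTop hden)
  rw [← Real.sqrt_div' _ hq.le]
  rwa [sub_zero] at this

end MoranFactor

lemma prod_Icc_one_div_telescope {K : Type*} [Field K] {u : ℕ → K} {n : ℕ}
    (hu : ∀ t ≤ n, u t ≠ 0) : ∏ t ∈ Icc 1 n, u (t - 1) / u t = u 0 / u n := by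
  induction n with
  | zero => simp [hu 0 le_rfl]
  | succ m ih =>
    rw [prod_Icc_succ_top (by omega), ih fun t ht => hu t (by omega), Nat.add_sub_cancel]
    field_simp [hu m (by omega)]

lemma existsUnique_gt_eq_of_strictMonoOn_Ici {G : ℝ → ℝ} {a c L : ℝ}
    (hmono : StrictMonoOn G (Set.Ici a)) (hcont : ContinuousOn G (Set.Ici a)) (ha : G a < c)
    (hlim : Tendsto G atTop (𝓝 L)) (hcL : c < L) : ∃! x, a < x ∧ G x = c := by
  obtain ⟨M, hM⟩ := ((hlim.eventually (eventually_gt_nhds hcL)).and (eventually_ge_atTop a)).exists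
  obtain ⟨x, hx, hGx⟩ :=
    intermediate_value_Ioo hM.2 (hcont.mono Set.Icc_subset_Ici_self) ⟨ha, hM.1⟩
  refine ⟨x, ⟨hx.1, hGx⟩, fun y hy => ?_⟩
  exact hmono.injOn (Set.mem_Ici.2 hy.1.le) (Set.mem_Ici.2 hx.1.le) (hy.2.trans hGx.symm)

/-- the discrete Moran equation. For a strictly decreasing schedule
`1 = ᾱ_0 > ᾱ_1 > ⋯ > ᾱ_T > 0`, the product `G(λ) = ∏_{t=1}^T f_t(λ)` is strictly
increasing on the domain where all factors are positive, `G(1) < 1`,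
`G(λ) → 1/√ᾱ_T > 1` as `λ → ∞`, and there is a unique `λ** > 1` with `G(λ**) = 1`. -/
theorem stmt_8 (T : ℕ) (hT : 1 ≤ T) (α : ℕ → ℝ) (h0 : α 0 = 1)
    (hanti : ∀ s t : ℕ, s < t → t ≤ T → α t < α s) (hpos : 0 < α T) :
    let b : ℕ → ℝ := fun t =>
      Real.sqrt (1 - α (t - 1)) - Real.sqrt (α (t - 1)) * Real.sqrt (1 - α t) / Real.sqrt (α t)
    let f : ℕ → ℝ → ℝ := fun t lam =>
      Real.sqrt (α (t - 1) / α t) - |b t| * Real.sqrt (1 - α t) / (lam * α t + (1 - α t))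
    let G : ℝ → ℝ := fun lam => ∏ t ∈ Finset.Icc 1 T, f t lam
    StrictMonoOn G {lam : ℝ | 0 < lam ∧ ∀ t ∈ Finset.Icc 1 T, 0 < f t lam} ∧
    G 1 < 1 ∧
    Filter.Tendsto G Filter.atTop (nhds (1 / Real.sqrt (α T))) ∧
    1 < 1 / Real.sqrt (α T) ∧
    (∃! lam : ℝ, 1 < lam ∧ G lam = 1) := by
  intro b f G
  have hα : StrictAntiOn α (Set.Iic T) := fun s _ t ht hst => hanti s t hst ht
  have hαpos : ∀ t ≤ T, 0 < α t := fun t ht => hpos.trans_le (hα.antitoneOn ht (le_refl T) ht)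
  have hfac : ∀ t ∈ Icc 1 T, StrictMonoOn (f t) (Set.Ioi 0) ∧ (∀ lam, 1 ≤ lam → 0 < f t lam) ∧
      f t 1 < 1 ∧ ContinuousOn (f t) (Set.Ioi 0) ∧
      Tendsto (f t) atTop (𝓝 (√(α (t - 1)) / √(α t))) := by
    intro t ht
    obtain ⟨ht1, htT⟩ := mem_Icc.1 ht
    have hq : 0 < α t := hαpos t htT
    have hqp : α t < α (t - 1) := hα (Set.mem_Iic.2 (by omega)) htT (by omega)
    have hp : α (t - 1) ≤ 1 :=
      h0 ▸ hα.antitoneOn (Nat.zero_le T) (Set.mem_Iic.2 (by omega)) (Nat.zero_le _)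
    exact ⟨moranFactor_strictMonoOn hq hqp hp, fun _ => moranFactor_pos hq hqp hp,
      moranFactor_one_lt_one hq hqp hp, continuousOn_moranFactor hq.le (hqp.trans_le hp).le,
      tendsto_moranFactor_atTop hq⟩
  have hne : (Icc 1 T).Nonempty := nonempty_Icc.2 hT
  have hGmono : StrictMonoOn G {lam : ℝ | 0 < lam ∧ ∀ t ∈ Icc 1 T, 0 < f t lam} :=
    fun x hx y _ hxy => prod_lt_prod_of_nonempty hx.2
      (fun t ht => (hfac t ht).1 hx.1 (hx.1.trans hxy) hxy) hne
  have hG1 : G 1 < 1 := by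
    simpa using prod_lt_prod_of_nonempty (fun t ht => (hfac t ht).2.1 1 le_rfl)
      (fun t ht => (hfac t ht).2.2.1) hne
  have hGlim : Tendsto G atTop (𝓝 (1 / √(α T))) := by
    have := tendsto_finsetProd (Icc 1 T) fun t ht => (hfac t ht).2.2.2.2
    rwa [prod_Icc_one_div_telescope (u := fun t => √(α t))
      fun t ht => (Real.sqrt_pos.2 (hαpos t ht)).ne', h0, Real.sqrt_one] at this
  have hlim_gt : 1 < 1 / √(α T) := one_lt_one_div (Real.sqrt_pos.2 hpos) <|
    (Real.sqrt_lt_sqrt hpos.le (h0 ▸ hanti 0 T hT le_rfl)).trans_eq Real.sqrt_one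
  refine ⟨hGmono, hG1, hGlim, hlim_gt, existsUnique_gt_eq_of_strictMonoOn_Ici ?_ ?_ hG1 hGlim hlim_gt⟩
  · exact hGmono.mono fun lam (hlam : 1 ≤ lam) =>
      ⟨one_pos.trans_le hlam, fun t ht => (hfac t ht).2.1 lam hlam⟩
  · exact continuousOn_finsetProd _ fun t ht =>
      (hfac t ht).2.2.2.1.mono fun x (hx : 1 ≤ x) => one_pos.trans_le hx
end

section
/- Let $T \geq 3$ and let $\{\bar\alpha_t\}_{t=0}^T$ be strictly decreasing in $(0,1]$ with $\bar\alpha_0 = 1$. Define $L_t^* = (\sqrt{\bar\alpha_{t-1}/\bar\alpha_t} - 1)/|b_t|$ with $b_t = \sqrt{1-\bar\alpha_{t-1}} - \sqrt{\bar\alpha_{t-1}(1-\bar\alpha_t)/\bar\alpha_t}$. Then there is no constant $L^* > 0$ with $L_t^* = L^*$ for all $t \in \{1,\ldots,T\}$. -/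
/-- impossibility of strict `L_t^*`-equalisation. For `T ≥ 3` and a
strictly decreasing schedule in `(0,1]` with `ᾱ_0 = 1`, there is no constant
`L* > 0` with `L_t^* = L*` for all `t ∈ {1,…,T}`, where
`L_t^* = (√(ᾱ_{t-1}/ᾱ_t) - 1)/|b_t|` and
`b_t = √(1-ᾱ_{t-1}) - √(ᾱ_{t-1}(1-ᾱ_t)/ᾱ_t)`. -/
theorem stmt_11 (T : ℕ) (hT : 3 ≤ T) (α : ℕ → ℝ)
    (hmem : ∀ t ≤ T, α t ∈ Set.Ioc (0 : ℝ) 1)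
    (hanti : ∀ s t : ℕ, s < t → t ≤ T → α t < α s)
    (h0 : α 0 = 1) :
    ¬ ∃ L : ℝ, 0 < L ∧ ∀ t : ℕ, 1 ≤ t → t ≤ T →
        (Real.sqrt (α (t - 1) / α t) - 1) /
          |Real.sqrt (1 - α (t - 1)) - Real.sqrt (α (t - 1) * (1 - α t) / α t)| = L := by
  rintro ⟨L, hL, hEq⟩
  -- key algebraic extraction
  have key : ∀ a b : ℝ, 0 < b → b < a → a ≤ 1 →
      (Real.sqrt (a / b) - 1) /
        |Real.sqrt (1 - a) - Real.sqrt (a * (1 - b) / b)| = L →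
      Real.sqrt a - Real.sqrt b
        = L * (Real.sqrt a * Real.sqrt (1 - b) - Real.sqrt b * Real.sqrt (1 - a)) := by
    intro a b hb hba ha h
    have ha0 : 0 < a := hb.trans hba
    have hsb : 0 < Real.sqrt b := Real.sqrt_pos.mpr hb
    have hsa : 0 < Real.sqrt a := Real.sqrt_pos.mpr ha0
    have e1 : Real.sqrt (a / b) = Real.sqrt a / Real.sqrt b :=
      Real.sqrt_div ha0.le b
    have e2 : Real.sqrt (a * (1 - b) / b)
        = Real.sqrt a * Real.sqrt (1 - b) / Real.sqrt b := by
      rw [Real.sqrt_div (by nlinarith : (0:ℝ) ≤ a * (1 - b)) b,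
        Real.sqrt_mul ha0.le]
    have hlt : (1 : ℝ) - a < a * (1 - b) / b := by
      rw [lt_div_iff₀ hb]; nlinarith
    have hslt : Real.sqrt (1 - a) < Real.sqrt (a * (1 - b) / b) :=
      Real.sqrt_lt_sqrt (by nlinarith [Real.sqrt_nonneg (1 - a)] ) hlt
    have hslt' : Real.sqrt (1 - a) < Real.sqrt a * Real.sqrt (1 - b) / Real.sqrt b := by
      rw [← e2]; exact hslt
    have habs : |Real.sqrt (1 - a) - Real.sqrt (a * (1 - b) / b)|
        = Real.sqrt a * Real.sqrt (1 - b) / Real.sqrt b - Real.sqrt (1 - a) := by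
      rw [abs_of_neg (by linarith), e2]; ring
    rw [habs, e1, div_eq_iff (by linarith : Real.sqrt a * Real.sqrt (1 - b) / Real.sqrt b - Real.sqrt (1 - a) ≠ 0)] at h
    field_simp at h
    nlinarith [h, hsb]
  -- apply at t = 1 and t = 2
  have h1m := hmem 1 (by omega)
  have h2m := hmem 2 (by omega)
  have h12 : α 2 < α 1 := hanti 1 2 (by omega) (by omega)
  have h01 : α 1 < 1 := by
    have := hanti 0 1 (by omega) (by omega); rwa [h0] at this
  have hE1 := hEq 1 (le_refl 1) (by omega)
  have hE2 := hEq 2 (by omega) (by omega)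
  rw [show (1:ℕ) - 1 = 0 from rfl, h0] at hE1
  rw [show (2:ℕ) - 1 = 1 from rfl] at hE2
  have k1 := key 1 (α 1) h1m.1 h01 le_rfl hE1
  have k2 := key (α 1) (α 2) h2m.1 h12 h1m.2 hE2
  rw [Real.sqrt_one, show (1:ℝ) - 1 = 0 by ring, Real.sqrt_zero] at k1
  have k1 : 1 - Real.sqrt (α 1) = L * Real.sqrt (1 - α 1) := by linarith [k1]
  -- k1 : 1 - √(α 1) = L * √(1 - α 1)
  set s1 := Real.sqrt (α 1) with hs1
  set s2 := Real.sqrt (α 2) with hs2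
  set c1 := Real.sqrt (1 - α 1) with hc1
  set c2 := Real.sqrt (1 - α 2) with hc2
  have hs1pos : 0 < s1 := Real.sqrt_pos.mpr h1m.1
  have hs2pos : 0 < s2 := Real.sqrt_pos.mpr h2m.1
  have hs1lt : s1 < 1 := by
    rw [hs1, show (1:ℝ) = Real.sqrt 1 by simp]
    exact Real.sqrt_lt_sqrt h1m.1.le h01
  have hs21 : s2 < s1 := Real.sqrt_lt_sqrt h2m.1.le h12
  have hsq1 : s1 ^ 2 = α 1 := Real.sq_sqrt h1m.1.le
  have hsq2 : s2 ^ 2 = α 2 := Real.sq_sqrt h2m.1.le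
  have hcq1 : c1 ^ 2 = 1 - α 1 := Real.sq_sqrt (by linarith)
  have hcq2 : c2 ^ 2 = 1 - α 2 := Real.sq_sqrt (by linarith)
  -- from k1 : 1 - s1 = L * c1, substitute into k2 to get 1 - s2 = L * c2
  have k2' : 1 - s2 = L * c2 := by
    have h5 : s1 - s2 = L * s1 * c2 - s2 * (1 - s1) := by
      rw [k2, k1]; ring
    have : s1 * (1 - s2) = s1 * (L * c2) := by nlinarith
    exact mul_left_cancel₀ (ne_of_gt hs1pos) this
  -- cancel (1 - s_i) > 0 and conclude s1 = s2, contradiction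
  have r1 : L ^ 2 * (1 + s1) = 1 - s1 := by
    have h1 : (0:ℝ) < 1 - s1 := by linarith
    have e : (1 - s1) * (1 - s1) = (1 - s1) * (L ^ 2 * (1 + s1)) := by
      have e0 : (1 - s1) * (1 - s1) = (L * c1) ^ 2 := by rw [← k1]; ring
      rw [e0, mul_pow, hcq1, ← hsq1]; ring
    exact (mul_left_cancel₀ (ne_of_gt h1) e).symm
  have r2 : L ^ 2 * (1 + s2) = 1 - s2 := by
    have h1 : (0:ℝ) < 1 - s2 := by linarith
    have e : (1 - s2) * (1 - s2) = (1 - s2) * (L ^ 2 * (1 + s2)) := by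
      have e0 : (1 - s2) * (1 - s2) = (L * c2) ^ 2 := by rw [← k2']; ring
      rw [e0, mul_pow, hcq2, ← hsq2]; ring
    exact (mul_left_cancel₀ (ne_of_gt h1) e).symm
  nlinarith [sq_nonneg L]
end

section
/- Let $T \in \mathbb{N}$ and for each $t \in \{0, 1/T, \ldots, (T-1)/T\}$ suppose the vector field $v_\theta(\cdot, t) : \mathbb{R}^n \to \mathbb{R}^n$ is $C^1$ with Jacobian $J_x v_\theta(x,t) = -(\mu_t(x)/(1-t)) I_n + R_t(x)$, where $0 < \mu_t^{\min} \leq \mu_t(x) \leq \mu_t^{\max}$, $\|R_t(x)\|_{op} \leq \tilde\delta_t$, $\mu_t^{\min} > \tilde\delta_t (1-t)$, and $\mu_t^{\max} < T(1-t)$. Then the Euler step $\Psi_t(x) = x + \frac{1}{T} v_\theta(x,t)$ is a contraction on $(\mathbb{R}^n, \|\cdot\|_2)$ with factor $\tilde\kappa_t = (1 - \mu_t^{\min}/(T(1-t))) + \tilde\delta_t/T \in (0,1)$, and the composition $\Psi = \Psi_{(T-1)/T} \circ \cdots \circ \Psi_0$ has a unique fixed point reached at geometric rate $\prod_t \tilde\kappa_t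 < 1$. -/
/-!
The Jacobian of the Euler step `x ↦ x + T⁻¹ v(x)` is `(1 - μ/(T(1-t))) • id + T⁻¹ R`. The scalar
part lies in `[0, 1 - μ_min/(T(1-t))]` because `μ ≤ μ_max < T(1-t)`, so the Jacobian has operator
norm at most `κ̃_t`, and the mean value inequality makes the step `κ̃_t`-Lipschitz; the condition
`δ̃_t (1-t) < μ_min` is exactly `κ̃_t < 1`. Lipschitz constants multiply under composition, so
the composition is a contraction with factor `∏ κ̃_t` and Banach's fixed point theorem applies.
-/

/-- `fmComp Ψ T = Ψ (T-1) ∘ ⋯ ∘ Ψ 1 ∘ Ψ 0` (so `Ψ 0` is applied first). -/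
def fmComp {E : Type*} (Ψ : ℕ → E → E) : ℕ → E → E
  | 0 => id
  | j + 1 => fun x => Ψ j (fmComp Ψ j x)

open Finset

section EulerStep

variable {E : Type*} [NormedAddCommGroup E] [NormedSpace ℝ E]

theorem norm_smul_id_add_le (a : ℝ) (B : E →L[ℝ] E) :
    ‖a • ContinuousLinearMap.id ℝ E + B‖ ≤ |a| + ‖B‖ := by
  have hid : ‖a • ContinuousLinearMap.id ℝ E‖ ≤ |a| :=
    calc _ ≤ ‖a‖ * ‖ContinuousLinearMap.id ℝ E‖ := ContinuousLinearMap.opNorm_smul_le _ _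
      _ ≤ |a| := mul_le_of_le_one_right (norm_nonneg a) ContinuousLinearMap.norm_id_le
  exact (norm_add_le _ _).trans (add_le_add_left hid _)

theorem norm_euler_step_sub_le {h cmin δ : ℝ} {v : E → E} {c : E → ℝ} {R : E → E →L[ℝ] E}
    (hh : 0 ≤ h) (hv : Differentiable ℝ v)
    (hJ : ∀ x, fderiv ℝ v x = (-c x) • ContinuousLinearMap.id ℝ E + R x)
    (hc : ∀ x, cmin ≤ c x ∧ h * c x ≤ 1) (hR : ∀ x, ‖R x‖ ≤ δ) (x y : E) :
    ‖(x + h • v x) - (y + h • v y)‖ ≤ (1 - h * cmin + h * δ) * ‖x - y‖ := by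
  have hderiv : ∀ z, HasFDerivAt (fun x => x + h • v x)
      ((1 - h * c z) • ContinuousLinearMap.id ℝ E + h • R z) z := by
    intro z
    exact ((hasFDerivAt_id z).fun_add ((hv z).hasFDerivAt.fun_const_smul h)).congr_fderiv
      (by rw [hJ z]; module)
  have hbound : ∀ z, ‖(1 - h * c z) • ContinuousLinearMap.id ℝ E + h • R z‖
      ≤ 1 - h * cmin + h * δ := by
    intro z
    obtain ⟨hcmin, hc1⟩ := hc z
    calc _ ≤ |1 - h * c z| + ‖h • R z‖ := norm_smul_id_add_le _ _
      _ ≤ (1 - h * cmin) + h * δ := by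
        rw [abs_of_nonneg (by linarith), norm_smul, Real.norm_of_nonneg hh]
        gcongr
        exact hR z
  exact convex_univ.norm_image_sub_le_of_norm_hasFDerivWithin_le
    (fun z _ => (hderiv z).hasFDerivWithinAt) (fun z _ => hbound z)
    (Set.mem_univ y) (Set.mem_univ x)

theorem flowMatching_euler_step_contraction {T t μmin μmax δ : ℝ} {v : E → E} {μ : E → ℝ}
    {R : E → E →L[ℝ] E} (hT : 0 < T) (ht : t < 1) (hv : Differentiable ℝ v)
    (hJ : ∀ x, fderiv ℝ v x = (-(μ x / (1 - t))) • ContinuousLinearMap.id ℝ E + R x)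
    (hμ : ∀ x, μ x ∈ Set.Icc μmin μmax) (hR : ∀ x, ‖R x‖ ≤ δ)
    (h1 : δ * (1 - t) < μmin) (h2 : μmax < T * (1 - t)) :
    (1 - μmin / (T * (1 - t))) + δ / T ∈ Set.Ioo 0 1 ∧
      ∀ x y, ‖(x + T⁻¹ • v x) - (y + T⁻¹ • v y)‖
        ≤ ((1 - μmin / (T * (1 - t))) + δ / T) * ‖x - y‖ := by
  have hs : 0 < 1 - t := sub_pos.mpr ht
  have hδ : 0 ≤ δ := (norm_nonneg _).trans (hR 0)
  have hμmin : μmin < T * (1 - t) := ((hμ 0).1.trans (hμ 0).2).trans_lt h2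
  have hκ : (1 - μmin / (T * (1 - t))) + δ / T
      = 1 - T⁻¹ * (μmin / (1 - t)) + T⁻¹ * δ := by
    field_simp
  refine ⟨⟨?_, ?_⟩, ?_⟩
  · have : μmin / (T * (1 - t)) < 1 := (div_lt_one (by positivity)).mpr hμmin
    have : 0 ≤ δ / T := by positivity
    linarith
  · have : δ / T < μmin / (T * (1 - t)) := by
      rw [div_lt_div_iff₀ hT (by positivity)]
      nlinarith
    linarith
  · rw [hκ]
    refine norm_euler_step_sub_le (inv_nonneg.mpr hT.le) hv hJ (fun x => ⟨?_, ?_⟩) hR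
    · exact div_le_div_of_nonneg_right (hμ x).1 hs.le
    · rw [← div_eq_inv_mul, div_div, div_le_one (by positivity)]
      linarith [(hμ x).2]

end EulerStep

theorem dist_fmComp_le {X : Type*} [PseudoMetricSpace X] {Ψ : ℕ → X → X} {K : ℕ → ℝ} {m : ℕ}
    (hK : ∀ j < m, 0 ≤ K j) (hΨ : ∀ j < m, ∀ x y, dist (Ψ j x) (Ψ j y) ≤ K j * dist x y)
    (x y : X) : dist (fmComp Ψ m x) (fmComp Ψ m y) ≤ (∏ j ∈ range m, K j) * dist x y := by
  induction m with
  | zero => simp [fmComp]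
  | succ m ih =>
    calc dist (Ψ m (fmComp Ψ m x)) (Ψ m (fmComp Ψ m y))
        ≤ K m * dist (fmComp Ψ m x) (fmComp Ψ m y) := hΨ m m.lt_succ_self _ _
      _ ≤ K m * ((∏ j ∈ range m, K j) * dist x y) := by
          gcongr
          · exact hK m m.lt_succ_self
          · exact ih (fun j hj => hK j (hj.trans m.lt_succ_self))
              (fun j hj => hΨ j (hj.trans m.lt_succ_self))
      _ = (∏ j ∈ range (m + 1), K j) * dist x y := by rw [prod_range_succ]; ring

theorem exists_unique_fixedPt_of_dist_le_mul {X : Type*} [MetricSpace X] [CompleteSpace X]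
    [Nonempty X] {f : X → X} {K : ℝ} (hK0 : 0 ≤ K) (hK1 : K < 1)
    (hf : ∀ x y, dist (f x) (f y) ≤ K * dist x y) :
    ∃ xstar, f xstar = xstar ∧ (∀ y, f y = y → y = xstar) ∧
      ∀ x (k : ℕ), dist (f^[k] x) xstar ≤ K ^ k * dist x xstar := by
  lift K to NNReal using hK0
  have hlip : LipschitzWith K f := LipschitzWith.of_dist_le_mul hf
  have hcontr : ContractingWith K f := ⟨by exact_mod_cast hK1, hlip⟩
  refine ⟨ContractingWith.fixedPoint f hcontr, hcontr.fixedPoint_isFixedPt,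
    fun y hy => hcontr.fixedPoint_unique hy, fun x k => ?_⟩
  have := (hlip.iterate k).dist_le_mul x (ContractingWith.fixedPoint f hcontr)
  rwa [Function.iterate_fixed hcontr.fixedPoint_isFixedPt, NNReal.coe_pow] at this

theorem stmt_19_general {n : ℕ} (T : ℕ) (hT : 0 < T)
    (v : ℕ → EuclideanSpace ℝ (Fin n) → EuclideanSpace ℝ (Fin n))
    (μ : ℕ → EuclideanSpace ℝ (Fin n) → ℝ)
    (R : ℕ → EuclideanSpace ℝ (Fin n) →
      (EuclideanSpace ℝ (Fin n) →L[ℝ] EuclideanSpace ℝ (Fin n)))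
    (μmin μmax δ : ℕ → ℝ)
    (hdiff : ∀ j < T, Differentiable ℝ (v j))
    (hJ : ∀ j < T, ∀ x, fderiv ℝ (v j) x =
      (-(μ j x / (1 - (j : ℝ) / T))) •
        ContinuousLinearMap.id ℝ (EuclideanSpace ℝ (Fin n)) + R j x)
    (hμ : ∀ j < T, ∀ x, μ j x ∈ Set.Icc (μmin j) (μmax j))
    (hR : ∀ j < T, ∀ x, ‖R j x‖ ≤ δ j)
    (h1 : ∀ j < T, δ j * (1 - (j : ℝ) / T) < μmin j)
    (h2 : ∀ j < T, μmax j < (T : ℝ) * (1 - (j : ℝ) / T)) :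
    let κ : ℕ → ℝ := fun j => (1 - μmin j / ((T : ℝ) * (1 - (j : ℝ) / T))) + δ j / T
    let Ψ : ℕ → EuclideanSpace ℝ (Fin n) → EuclideanSpace ℝ (Fin n) :=
      fun j x => x + ((T : ℝ))⁻¹ • v j x
    (∀ j < T, κ j ∈ Set.Ioo (0 : ℝ) 1 ∧
      ∀ x y, ‖Ψ j x - Ψ j y‖ ≤ κ j * ‖x - y‖) ∧
    (∏ j ∈ Finset.range T, κ j) < 1 ∧
    ∃ xstar, fmComp Ψ T xstar = xstar ∧
      (∀ y, fmComp Ψ T y = y → y = xstar) ∧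
      ∀ x (k : ℕ), ‖(fmComp Ψ T)^[k] x - xstar‖ ≤
        (∏ j ∈ Finset.range T, κ j) ^ k * ‖x - xstar‖ := by
  intro κ Ψ
  have hstep : ∀ j < T, κ j ∈ Set.Ioo (0 : ℝ) 1 ∧ ∀ x y, ‖Ψ j x - Ψ j y‖ ≤ κ j * ‖x - y‖ :=
    fun j hj => flowMatching_euler_step_contraction (Nat.cast_pos.mpr hT)
      ((div_lt_one (Nat.cast_pos.mpr hT)).mpr (Nat.cast_lt.mpr hj)) (hdiff j hj) (hJ j hj)
      (hμ j hj) (hR j hj) (h1 j hj) (h2 j hj)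
  have hprod : ∏ j ∈ range T, κ j < 1 := by
    simpa using prod_lt_prod_of_nonempty (g := fun _ => (1 : ℝ))
      (fun j hj => (hstep j (mem_range.mp hj)).1.1) (fun j hj => (hstep j (mem_range.mp hj)).1.2)
      (nonempty_range_iff.mpr hT.ne')
  have hcomp : ∀ x y, dist (fmComp Ψ T x) (fmComp Ψ T y) ≤ (∏ j ∈ range T, κ j) * dist x y :=
    dist_fmComp_le (fun j hj => (hstep j hj).1.1.le) fun j hj x y => by
      rw [dist_eq_norm, dist_eq_norm]
      exact (hstep j hj).2 x y
  obtain ⟨xstar, hfix, huniq, hrate⟩ := exists_unique_fixedPt_of_dist_le_mul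
    (prod_nonneg fun j hj => (hstep j (mem_range.mp hj)).1.1.le) hprod hcomp
  exact ⟨hstep, hprod, xstar, hfix, huniq, by simpa only [dist_eq_norm] using hrate⟩

/-- flow matching fixed point theorem. Under condition (PC-FM), the
Euler step `Ψ_j(x) = x + (1/T) v(x, j/T)` is a contraction with factor
`κ̃_j = (1 - μ_min/(T(1 - j/T))) + δ̃_j/T ∈ (0,1)`, and the composition
`Ψ_{(T-1)/T} ∘ ⋯ ∘ Ψ_0` has a unique fixed point reached at geometric rate
`∏_j κ̃_j < 1`. -/
theorem stmt_19 {n : ℕ} (T : ℕ) (hT : 0 < T)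
    (v : ℕ → EuclideanSpace ℝ (Fin n) → EuclideanSpace ℝ (Fin n))
    (μ : ℕ → EuclideanSpace ℝ (Fin n) → ℝ)
    (R : ℕ → EuclideanSpace ℝ (Fin n) →
      (EuclideanSpace ℝ (Fin n) →L[ℝ] EuclideanSpace ℝ (Fin n)))
    (μmin μmax δ : ℕ → ℝ)
    (hdiff : ∀ j < T, Differentiable ℝ (v j))
    (hJ : ∀ j < T, ∀ x, fderiv ℝ (v j) x =
      (-(μ j x / (1 - (j : ℝ) / T))) •
        ContinuousLinearMap.id ℝ (EuclideanSpace ℝ (Fin n)) + R j x)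
    (hμ : ∀ j < T, ∀ x, μ j x ∈ Set.Icc (μmin j) (μmax j))
    (hμ0 : ∀ j < T, 0 < μmin j)
    (hR : ∀ j < T, ∀ x, ‖R j x‖ ≤ δ j)
    (h1 : ∀ j < T, δ j * (1 - (j : ℝ) / T) < μmin j)
    (h2 : ∀ j < T, μmax j < (T : ℝ) * (1 - (j : ℝ) / T)) :
    let κ : ℕ → ℝ := fun j => (1 - μmin j / ((T : ℝ) * (1 - (j : ℝ) / T))) + δ j / T
    let Ψ : ℕ → EuclideanSpace ℝ (Fin n) → EuclideanSpace ℝ (Fin n) :=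
      fun j x => x + ((T : ℝ))⁻¹ • v j x
    (∀ j < T, κ j ∈ Set.Ioo (0 : ℝ) 1 ∧
      ∀ x y, ‖Ψ j x - Ψ j y‖ ≤ κ j * ‖x - y‖) ∧
    (∏ j ∈ Finset.range T, κ j) < 1 ∧
    ∃ xstar, fmComp Ψ T xstar = xstar ∧
      (∀ y, fmComp Ψ T y = y → y = xstar) ∧
      ∀ x (k : ℕ), ‖(fmComp Ψ T)^[k] x - xstar‖ ≤
        (∏ j ∈ Finset.range T, κ j) ^ k * ‖x - xstar‖ :=
  stmt_19_general T hT v μ R μmin μmax δ hdiff hJ hμ hR h1 h2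
end
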